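/- (1-θ)·β·p·T_max/(c·r_I) ≤ 1 if and only if R₀ ≤ r_I/δ. Likewise, (1-θ)·β·p·T_max/(c·r_I) > 1 if and only if R₀ > r_I/δ, and (1-θ)·β·p·T_max/(c·r_I) ≥ 1 if and only if R₀ ≥ r_I/δ. -/
import Mathlib


open Set

/-- The uninfected equilibrium value `T⁰`. -/
noncomputable def hcvT0 (s rT dT Tmax : ℝ) : ℝ :=
  Tmax / (2 * rT) * (rT - dT + Real.sqrt ((rT - dT) ^ 2 + 4 * rT * s / Tmax))

/-- The basic reproduction number `R₀` (with `1 - θ = (1-ε)(1-η)`). -/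
noncomputable def hcvR0 (s rT rI dT dI Tmax β p q c η ε : ℝ) : ℝ :=
  rI / (dI + q) * (1 - hcvT0 s rT dT Tmax / Tmax)
    + (1 - ε) * (1 - η) * β * p * hcvT0 s rT dT Tmax / (c * (dI + q))

lemma hcvT0_pos (s rT dT Tmax : ℝ) (hs : 0 < s) (hrT : 0 < rT) (hTmax : 0 < Tmax) :
    0 < hcvT0 s rT dT Tmax := by
  unfold hcvT0
  have h1 : Real.sqrt ((rT - dT) ^ 2) < Real.sqrt ((rT - dT) ^ 2 + 4 * rT * s / Tmax) := by
    apply Real.sqrt_lt_sqrt (sq_nonneg _)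
    have : 0 < 4 * rT * s / Tmax := by positivity
    linarith
  rw [Real.sqrt_sq_eq_abs] at h1
  have h2 : -(rT - dT) ≤ |rT - dT| := neg_le_abs _
  have h3 : 0 < rT - dT + Real.sqrt ((rT - dT) ^ 2 + 4 * rT * s / Tmax) := by linarith
  have h4 : 0 < Tmax / (2 * rT) := by positivity
  exact mul_pos h4 h3

/-- `(1-θ)βpT_max/(c r_I) ≤ 1 ↔ R₀ ≤ r_I/δ`, and the strict and reverse
versions. -/
theorem hcv_R0_threshold_iff
    (s rT rI dT dI Tmax β p q c η ε : ℝ)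
    (hs : 0 < s) (hrT : 0 < rT) (hrI : 0 < rI) (hdT : 0 < dT) (hdI : 0 < dI)
    (hTmax : 0 < Tmax) (hβ : 0 < β) (hp : 0 < p) (hq : 0 < q) (hc : 0 < c)
    (hη : η ∈ Set.Ico (0 : ℝ) 1) (hε : ε ∈ Set.Ico (0 : ℝ) 1)
    (hrIT : rI ≤ rT) (hsT : s ≤ dT * Tmax) (hdTI : dT ≤ dI) :
    ((1 - ε) * (1 - η) * β * p * Tmax / (c * rI) ≤ 1 ↔
      hcvR0 s rT rI dT dI Tmax β p q c η ε ≤ rI / (dI + q)) ∧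
    ((1 - ε) * (1 - η) * β * p * Tmax / (c * rI) > 1 ↔
      hcvR0 s rT rI dT dI Tmax β p q c η ε > rI / (dI + q)) ∧
    ((1 - ε) * (1 - η) * β * p * Tmax / (c * rI) ≥ 1 ↔
      hcvR0 s rT rI dT dI Tmax β p q c η ε ≥ rI / (dI + q)) := by
  obtain ⟨hη0, hη1⟩ := hη
  obtain ⟨hε0, hε1⟩ := hε
  have hδ : 0 < dI + q := by linarith
  have hK : 0 < hcvT0 s rT dT Tmax := hcvT0_pos s rT dT Tmax hs hrT hTmax
  set K := hcvT0 s rT dT Tmax with hKdef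
  have key : hcvR0 s rT rI dT dI Tmax β p q c η ε - rI / (dI + q)
      = K / (dI + q) * ((1 - ε) * (1 - η) * β * p / c - rI / Tmax) := by
    unfold hcvR0
    rw [← hKdef]
    field_simp
    ring
  have hcrI : 0 < c * rI := mul_pos hc hrI
  have hKδ : 0 < K / (dI + q) := div_pos hK hδ
  have core : (1 - ε) * (1 - η) * β * p * Tmax / (c * rI) ≤ 1 ↔
      (1 - ε) * (1 - η) * β * p / c - rI / Tmax ≤ 0 := by
    rw [div_le_one hcrI, sub_nonpos, div_le_div_iff₀ hc hTmax]
    constructor <;> intro h <;> nlinarith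
  have corege : (1 : ℝ) ≤ (1 - ε) * (1 - η) * β * p * Tmax / (c * rI) ↔
      0 ≤ (1 - ε) * (1 - η) * β * p / c - rI / Tmax := by
    rw [le_div_iff₀ hcrI, sub_nonneg, div_le_div_iff₀ hTmax hc]
    constructor <;> intro h <;> nlinarith
  refine ⟨?_, ?_, ?_⟩
  · rw [core]
    constructor
    · intro h
      have := mul_nonpos_of_nonneg_of_nonpos (le_of_lt hKδ) h
      linarith [key]
    · intro h
      have h2 : K / (dI + q) * ((1 - ε) * (1 - η) * β * p / c - rI / Tmax) ≤
          K / (dI + q) * 0 := by rw [mul_zero]; linarith [key]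
      exact le_of_mul_le_mul_left h2 hKδ
  · rw [gt_iff_lt, gt_iff_lt, ← not_le, ← not_le, not_iff_not, core]
    constructor
    · intro h
      have := mul_nonpos_of_nonneg_of_nonpos (le_of_lt hKδ) h
      linarith [key]
    · intro h
      have h2 : K / (dI + q) * ((1 - ε) * (1 - η) * β * p / c - rI / Tmax) ≤
          K / (dI + q) * 0 := by rw [mul_zero]; linarith [key]
      exact le_of_mul_le_mul_left h2 hKδ
  · rw [ge_iff_le, ge_iff_le, corege]
    constructor
    · intro h
      have := mul_nonneg (le_of_lt hKδ) h
      linarith [key]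
    · intro h
      have h2 : K / (dI + q) * 0 ≤
          K / (dI + q) * ((1 - ε) * (1 - η) * β * p / c - rI / Tmax) := by
        rw [mul_zero]; linarith [key]
      exact le_of_mul_le_mul_left h2 hKδ
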